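/- arXiv:1904.07186 — 3 statements merged into one kernel-verified Lean document; each statement's English description precedes it below -/
import Mathlib

section
/- Let (y₁,y₂) : [0,T) → (0,∞)² be a differentiable solution of the ODE system with y₁(0), y₂(0) > 0. Assume a₁ = 0, a₂ = 0, and that h₁(t)/h₂(t) ≡ c̃ for a constant c̃ > 0, and suppose that y₁(t) ≥ y₁(0)·(y₂(t)/y₂(0))^{c̃} for all t ∈ [0,T). Set β = p₂₂ + c̃·p₂₁. If β > 1, then for every t ∈ [0,T): (y₁(0)/y₂(0)^{c̃})^{p₂₁}·∫₀ᵗ h₂(s) ds < y₂(0)^{1−β}/(β−1). (In particular, T is bounded above whenever the left-hand side, as a function of its upper limit, eventually exceeds the right-hand side.) -/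
open MeasureTheory Set Filter Topology

/-- Theorem 1.3(c.1) of the paper. With `a₁ = p₂₁-p₁₁+1 = 0`,
`a₂ = p₁₂-p₂₂+1 = 0`, `h₁/h₂ ≡ c̃ > 0`, the lower bound
`y₁ ≥ y₁(0)(y₂/y₂(0))^{c̃}` on `[0,T)`, and `β = p₂₂ + c̃ p₂₁ > 1`, one has
`(y₁(0)/y₂(0)^{c̃})^{p₂₁} ∫₀ᵗ h₂(s) ds < y₂(0)^{1-β}/(β-1)` for every
`t ∈ [0,T)`. -/
theorem statement17 (p11 p12 p21 p22 : ℝ)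
    (hp11 : 0 ≤ p11) (hp12 : 0 ≤ p12) (hp21 : 0 ≤ p21) (hp22 : 0 ≤ p22)
    (h1 h2 : ℝ → ℝ)
    (hh1c : ContinuousOn h1 (Set.Ici 0)) (hh2c : ContinuousOn h2 (Set.Ici 0))
    (hh1p : ∀ t : ℝ, 0 ≤ t → 0 < h1 t) (hh2p : ∀ t : ℝ, 0 ≤ t → 0 < h2 t)
    (ct : ℝ) (hct : 0 < ct) (hconst : ∀ t : ℝ, 0 ≤ t → h1 t / h2 t = ct)
    (T : ℝ) (hT : 0 < T)
    (y1 y2 : ℝ → ℝ)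
    (hy1pos : ∀ t ∈ Set.Ico (0:ℝ) T, 0 < y1 t)
    (hy2pos : ∀ t ∈ Set.Ico (0:ℝ) T, 0 < y2 t)
    (hy1d : ∀ t ∈ Set.Ico (0:ℝ) T,
      HasDerivWithinAt y1 (h1 t * y1 t ^ p11 * y2 t ^ p12) (Set.Ico 0 T) t)
    (hy2d : ∀ t ∈ Set.Ico (0:ℝ) T,
      HasDerivWithinAt y2 (h2 t * y2 t ^ p22 * y1 t ^ p21) (Set.Ico 0 T) t)
    (ha1 : p21 - p11 + 1 = 0) (ha2 : p12 - p22 + 1 = 0)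
    (hbound : ∀ t ∈ Set.Ico (0:ℝ) T,
      y1 0 * (y2 t / y2 0) ^ ct ≤ y1 t)
    (hβ : 1 < p22 + ct * p21) :
    ∀ t ∈ Set.Ico (0:ℝ) T,
      (y1 0 / y2 0 ^ ct) ^ p21 * (∫ s in (0:ℝ)..t, h2 s) <
        y2 0 ^ (1 - (p22 + ct * p21)) / ((p22 + ct * p21) - 1) := by
  intro t ht
  obtain ⟨ht0, htT⟩ := ht
  set β := p22 + ct * p21 with hβdef
  have hβ1 : (0:ℝ) < β - 1 := by simp only [hβdef]; linarith
  have h0mem : (0:ℝ) ∈ Set.Ico (0:ℝ) T := ⟨le_refl _, hT⟩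
  have hy20 : 0 < y2 0 := hy2pos 0 h0mem
  have hy10 : 0 < y1 0 := hy1pos 0 h0mem
  set C := (y1 0 / y2 0 ^ ct) ^ p21 with hCdef
  have hCpos : 0 < C :=
    Real.rpow_pos_of_pos (div_pos hy10 (Real.rpow_pos_of_pos hy20 ct)) p21
  set Φ : ℝ → ℝ := fun s => y2 s ^ (1 - β) + (β - 1) * C * ∫ u in (0:ℝ)..s, h2 u
    with hΦdef
  have hsub : Set.Icc (0:ℝ) t ⊆ Set.Ico 0 T := fun s hs => ⟨hs.1, lt_of_le_of_lt hs.2 htT⟩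
  have hh2Ioi : ContinuousOn h2 (Set.Ioi (0:ℝ)) := hh2c.mono Set.Ioi_subset_Ici_self
  -- derivative of Φ at interior points
  have key : ∀ s ∈ Set.Ioo (0:ℝ) t, HasDerivAt Φ
      ((h2 s * y2 s ^ p22 * y1 s ^ p21) * (1 - β) * y2 s ^ (1 - β - 1)
        + (β - 1) * C * h2 s) s := by
    intro s hs
    have hsmem : s ∈ Set.Ico (0:ℝ) T := ⟨hs.1.le, hs.2.trans htT⟩
    have hnhd : Set.Ico (0:ℝ) T ∈ 𝓝 s := Ico_mem_nhds hs.1 hsmem.2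
    have hy2s : HasDerivAt y2 (h2 s * y2 s ^ p22 * y1 s ^ p21) s :=
      (hy2d s hsmem).hasDerivAt hnhd
    have hF : HasDerivAt (fun u => y2 u ^ (1 - β))
        ((h2 s * y2 s ^ p22 * y1 s ^ p21) * (1 - β) * y2 s ^ (1 - β - 1)) s :=
      hy2s.rpow_const (Or.inl (hy2pos s hsmem).ne')
    have hint : IntervalIntegrable h2 volume 0 s := by
      apply ContinuousOn.intervalIntegrable
      apply hh2c.mono
      rw [Set.uIcc_of_le hs.1.le]
      exact fun u hu => hu.1
    have hI : HasDerivAt (fun u => ∫ x in (0:ℝ)..u, h2 x) (h2 s) s :=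
      intervalIntegral.integral_hasDerivAt_right hint
        (ContinuousOn.stronglyMeasurableAtFilter isOpen_Ioi hh2Ioi s hs.1)
        (hh2Ioi.continuousAt (Ioi_mem_nhds hs.1))
    rw [hΦdef]
    exact hF.add (hI.const_mul ((β - 1) * C))
  -- the derivative is nonpositive
  have hderiv_nonpos : ∀ s ∈ Set.Ioo (0:ℝ) t, deriv Φ s ≤ 0 := by
    intro s hs
    rw [(key s hs).deriv]
    have hsmem : s ∈ Set.Ico (0:ℝ) T := ⟨hs.1.le, hs.2.trans htT⟩
    have hy2s : 0 < y2 s := hy2pos s hsmem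
    have hh2s : 0 < h2 s := hh2p s hs.1.le
    have hb : C * y2 s ^ (ct * p21) ≤ y1 s ^ p21 := by
      have h1' := hbound s hsmem
      have h2' : (y1 0 * (y2 s / y2 0) ^ ct) ^ p21 ≤ y1 s ^ p21 :=
        Real.rpow_le_rpow (by positivity) h1' hp21
      have heq : C * y2 s ^ (ct * p21) = (y1 0 * (y2 s / y2 0) ^ ct) ^ p21 := by
        rw [hCdef, Real.mul_rpow hy10.le (Real.rpow_nonneg (by positivity) ct),
          ← Real.rpow_mul (by positivity : (0:ℝ) ≤ y2 s / y2 0),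
          Real.div_rpow hy10.le (Real.rpow_nonneg hy20.le ct),
          Real.div_rpow hy2s.le hy20.le,
          ← Real.rpow_mul hy20.le]
        field_simp
      rw [heq]; exact h2'
    have hprod : y2 s ^ (ct * p21) * y2 s ^ p22 * y2 s ^ (1 - β - 1) = 1 := by
      rw [← Real.rpow_add hy2s, ← Real.rpow_add hy2s]
      have hz : ct * p21 + p22 + (1 - β - 1) = 0 := by rw [hβdef]; ring
      rw [hz, Real.rpow_zero]
    have hkey : (β - 1) * C * h2 s
        ≤ (β - 1) * h2 s * y2 s ^ p22 * y2 s ^ (1 - β - 1) * y1 s ^ p21 := by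
      have hre : (β - 1) * h2 s * y2 s ^ p22 * y2 s ^ (1 - β - 1) * (C * y2 s ^ (ct * p21))
          = (β - 1) * C * h2 s * (y2 s ^ (ct * p21) * y2 s ^ p22 * y2 s ^ (1 - β - 1)) := by
        ring
      calc (β - 1) * C * h2 s
          = (β - 1) * h2 s * y2 s ^ p22 * y2 s ^ (1 - β - 1) * (C * y2 s ^ (ct * p21)) := by
            rw [hre, hprod, mul_one]
        _ ≤ (β - 1) * h2 s * y2 s ^ p22 * y2 s ^ (1 - β - 1) * y1 s ^ p21 :=
            mul_le_mul_of_nonneg_left hb (by positivity)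
    have hrw : (h2 s * y2 s ^ p22 * y1 s ^ p21) * (1 - β) * y2 s ^ (1 - β - 1)
        = -((β - 1) * h2 s * y2 s ^ p22 * y2 s ^ (1 - β - 1) * y1 s ^ p21) := by ring
    rw [hrw]
    linarith
  -- Φ is antitone on [0, t]
  have hy2cont : ContinuousOn y2 (Set.Icc 0 t) := fun s hs =>
    ((hy2d s (hsub hs)).continuousWithinAt).mono hsub
  have hintOn : IntegrableOn h2 (Set.uIcc 0 t) := by
    rw [Set.uIcc_of_le ht0]
    exact (hh2c.mono (fun u hu => hu.1)).integrableOn_Icc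
  have hΦcont : ContinuousOn Φ (Set.Icc 0 t) := by
    rw [hΦdef]
    apply ContinuousOn.add
    · exact hy2cont.rpow_const fun s hs => Or.inl (hy2pos s (hsub hs)).ne'
    · apply continuousOn_const.mul
      have := intervalIntegral.continuousOn_primitive_interval
        (a := (0:ℝ)) (b := t) (f := h2) (μ := volume) hintOn
      rwa [Set.uIcc_of_le ht0] at this
  have hanti : AntitoneOn Φ (Set.Icc 0 t) := by
    apply antitoneOn_of_deriv_nonpos (convex_Icc 0 t) hΦcont
    · rw [interior_Icc]
      exact fun s hs => ((key s hs).differentiableAt).differentiableWithinAt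
    · rw [interior_Icc]; exact hderiv_nonpos
  have hle : Φ t ≤ Φ 0 := hanti (Set.left_mem_Icc.mpr ht0) (Set.right_mem_Icc.mpr ht0) ht0
  have hFt : 0 < y2 t ^ (1 - β) := Real.rpow_pos_of_pos (hy2pos t ⟨ht0, htT⟩) _
  simp only [hΦdef, intervalIntegral.integral_same, mul_zero, add_zero] at hle
  rw [lt_div_iff₀ hβ1]
  nlinarith [hle, hFt]
end

section
/- Let (y₁,y₂) : [0,T) → (0,∞)² be a differentiable solution of the ODE system with y₁(0), y₂(0) > 0. Assume a₁ = 0, a₂ = 0, and that h₁(t)/h₂(t) ≡ c̃ for a constant c̃ > 0, and suppose that y₁(t) ≥ y₁(0)·(y₂(t)/y₂(0))^{c̃} for all t ∈ [0,T). Set γ = p₁₁ + p₁₂/c̃ and F(t) = (y₂(0)/y₁(0)^{1/c̃})^{p₁₂}·∫₀ᵗ h₁(s) ds. Then for every t ∈ [0,T): ∫_{y₁(0)}^{y₁(t)} s^{−γ} ds ≤ F(t). Consequently, if γ ≤ 1, or if γ > 1 and F(t) ≤ y₁(0)^{1−γ}/(γ−1) for all t ≥ 0, then for every finite S > 0 one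 has sup{ y₁(t) : t ∈ [0,T), t ≤ S } < ∞ (the first component does not blow up in finite time). -/
/-!
Along the solution, `d/dt ∫_{y₁(0)}^{y₁(t)} s^{-γ} ds = y₁^{-γ} h₁ y₁^{p₁₁} y₂^{p₁₂}`.
Inverting the lower bound on `y₁` gives `y₂ ≤ y₂(0) (y₁/y₁(0))^{1/c̃}`, and since
`γ = p₁₁ + p₁₂/c̃` all powers of `y₁` then cancel: the derivative is at most
`(y₂(0)/y₁(0)^{1/c̃})^{p₁₂} h₁`, and integrating gives the first claim.

The map `x ↦ ∫_{y₁(0)}^x s^{-γ} ds` is increasing; it is unbounded when `γ ≤ 1` and has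
supremum `y₁(0)^{1-γ}/(γ-1)` when `γ > 1`. As `F` is strictly increasing, `F(S) < F(S+1)` lies
below that supremum, so `F(S)` bounds `y₁` on `[0, S]`.
-/

open MeasureTheory Set

open Filter Topology

lemma hasDerivAt_integral_right_of_continuousOn {f : ℝ → ℝ} {s : Set ℝ} {a x : ℝ}
    (hf : ContinuousOn f s) (hsm : MeasurableSet s) (hs : s ∈ 𝓝 x) (hax : uIcc a x ⊆ s) :
    HasDerivAt (fun u => ∫ t in a..u, f t) (f x) x :=
  intervalIntegral.integral_hasDerivAt_right ((hf.mono hax).intervalIntegrable)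
    ⟨s, hs, hf.aestronglyMeasurable hsm⟩ (hf.continuousAt hs)

lemma strictMonoOn_integral_of_pos {g : ℝ → ℝ} {a : ℝ} (hg : ContinuousOn g (Ici a))
    (hpos : ∀ t ∈ Ici a, 0 < g t) : StrictMonoOn (fun t => ∫ s in a..t, g s) (Ici a) := by
  have hint : ∀ b c, a ≤ b → b ≤ c → IntervalIntegrable g volume b c := fun b c hb hbc =>
    (hg.mono fun s hs => hb.trans (uIcc_of_le hbc ▸ hs).1).intervalIntegrable
  intro u hu v hv huv
  have hsub := intervalIntegral.integral_interval_sub_left (hint a v le_rfl hv) (hint a u le_rfl hu)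
  have hpos' : 0 < ∫ s in u..v, g s :=
    intervalIntegral.intervalIntegral_pos_of_pos_on (hint u v hu huv.le)
      (fun s hs => hpos s (le_trans hu hs.1.le)) huv
  simp only
  linarith

lemma integral_comp_le_integral_of_mul_deriv_le {f g y y' : ℝ → ℝ} {T : ℝ}
    (hf : ContinuousOn f (Ioi 0)) (hg : ContinuousOn g (Ici 0))
    (hy : ∀ t ∈ Ico 0 T, 0 < y t)
    (hyd : ∀ t ∈ Ico 0 T, HasDerivWithinAt y (y' t) (Ico 0 T) t)
    (hle : ∀ t ∈ Ico 0 T, f (y t) * y' t ≤ g t) :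
    ∀ t ∈ Ico 0 T, ∫ s in y 0..y t, f s ≤ ∫ s in 0..t, g s := by
  intro t ht
  have hT : 0 ≤ T := ht.1.trans ht.2.le
  have h0 : (0 : ℝ) ∈ Ico 0 T := ⟨le_rfl, ht.1.trans_lt ht.2⟩
  have hF : ∀ u ∈ Ico 0 T, HasDerivAt (fun x => ∫ s in y 0..x, f s) (f (y u)) (y u) :=
    fun u hu => hasDerivAt_integral_right_of_continuousOn hf measurableSet_Ioi
      (Ioi_mem_nhds (hy u hu)) fun s hs => (lt_min (hy 0 h0) (hy u hu)).trans_le hs.1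
  have hG : ∀ u ∈ Ioo 0 T, HasDerivAt (fun x => ∫ s in 0..x, g s) (g u) u :=
    fun u hu => hasDerivAt_integral_right_of_continuousOn hg measurableSet_Ici
      (Ici_mem_nhds hu.1) fun s hs => (uIcc_of_le hu.1.le ▸ hs).1
  have hanti : AntitoneOn (fun u => (∫ s in y 0..y u, f s) - ∫ s in 0..u, g s) (Ico 0 T) := by
    refine antitoneOn_of_hasDerivWithinAt_nonpos (convex_Ico 0 T)
      (f' := fun u => f (y u) * y' u - g u) ?_ ?_ ?_
    · refine ContinuousOn.sub (fun u hu => (hF u hu).continuousAt.comp_continuousWithinAt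
        (hyd u hu).continuousWithinAt) ?_
      refine (intervalIntegral.continuousOn_primitive_interval ?_).mono
        (uIcc_of_le hT ▸ Ico_subset_Icc_self)
      exact (hg.mono (uIcc_of_le hT ▸ Icc_subset_Ici_self)).integrableOn_compact isCompact_uIcc
    · intro u hu
      rw [interior_Ico] at hu ⊢
      have hyu : HasDerivAt y (y' u) u := (hyd u (Ioo_subset_Ico_self hu)).hasDerivAt
        (mem_of_superset (Ioo_mem_nhds hu.1 hu.2) Ioo_subset_Ico_self)
      exact (((hF u (Ioo_subset_Ico_self hu)).comp u hyu).sub (hG u hu)).hasDerivWithinAt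
    · intro u hu
      rw [interior_Ico] at hu
      linarith [hle u (Ioo_subset_Ico_self hu)]
  have := hanti h0 ht ht.1
  simp only [intervalIntegral.integral_same, sub_zero] at this
  linarith

lemma rpow_le_mul_rpow_of_mul_div_rpow_le {a b c p x z : ℝ} (ha : 0 < a) (hb : 0 < b)
    (hc : 0 < c) (hp : 0 ≤ p) (hz : 0 ≤ z) (h : a * (z / b) ^ c ≤ x) :
    z ^ p ≤ (b / a ^ (1 / c)) ^ p * x ^ (p / c) := by
  have hx : 0 ≤ x := le_trans (by positivity) h
  have hzb : z / b ≤ (x / a) ^ c⁻¹ :=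
    (Real.le_rpow_inv_iff_of_pos (by positivity) (by positivity) hc).2 ((le_div_iff₀' ha).2 h)
  have hz' : z ≤ b / a ^ (1 / c) * x ^ (1 / c) := by
    rw [Real.div_rpow hx ha.le, ← one_div, div_le_iff₀ hb] at hzb
    linarith [show x ^ (1 / c) / a ^ (1 / c) * b = b / a ^ (1 / c) * x ^ (1 / c) by ring]
  calc z ^ p ≤ (b / a ^ (1 / c) * x ^ (1 / c)) ^ p := Real.rpow_le_rpow hz hz' hp
    _ = (b / a ^ (1 / c)) ^ p * x ^ (p / c) := by
      rw [Real.mul_rpow (by positivity) (by positivity), ← Real.rpow_mul hx, one_div_mul_eq_div]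

lemma rpow_neg_add_div_mul_le {c h K p q x z : ℝ} (hx : 0 < x) (hh : 0 ≤ h)
    (hz : z ^ p ≤ K * x ^ (p / c)) : x ^ (-(q + p / c)) * (h * x ^ q * z ^ p) ≤ K * h :=
  calc x ^ (-(q + p / c)) * (h * x ^ q * z ^ p)
      ≤ x ^ (-(q + p / c)) * (h * x ^ q * (K * x ^ (p / c))) := by gcongr
    _ = K * h * (x ^ (-(q + p / c)) * x ^ q * x ^ (p / c)) := by ring
    _ = K * h := by
      rw [← Real.rpow_add hx, ← Real.rpow_add hx, show -(q + p / c) + q + p / c = 0 by ring,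
        Real.rpow_zero, mul_one]

lemma integral_rpow_neg_of_pos {a x γ : ℝ} (ha : 0 < a) (hx : 0 < x) (hγ : γ ≠ 1) :
    ∫ s in a..x, s ^ (-γ) = (x ^ (1 - γ) - a ^ (1 - γ)) / (1 - γ) := by
  rw [integral_rpow (Or.inr ⟨by contrapose! hγ; linarith, notMem_uIcc_of_lt ha hx⟩),
    neg_add_eq_sub]

lemma exists_forall_le_of_integral_rpow_neg_le_of_le_one {a γ : ℝ} (ha : 0 < a) (hγ : γ ≤ 1)
    (B : ℝ) : ∃ C, ∀ x, 0 < x → ∫ s in a..x, s ^ (-γ) ≤ B → x ≤ C := by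
  rcases hγ.eq_or_lt with rfl | hγ
  · refine ⟨a * Real.exp B, fun x hx h => ?_⟩
    simp only [Real.rpow_neg_one, integral_inv_of_pos ha hx] at h
    rw [Real.log_le_iff_le_exp (by positivity), div_le_iff₀ ha] at h
    linarith
  · refine ⟨(a ^ (1 - γ) + (1 - γ) * B) ^ (1 - γ)⁻¹, fun x hx h => ?_⟩
    rw [integral_rpow_neg_of_pos ha hx hγ.ne, div_le_iff₀ (by linarith)] at h
    have hle : x ^ (1 - γ) ≤ a ^ (1 - γ) + (1 - γ) * B := by linarith
    exact (Real.le_rpow_inv_iff_of_pos hx.le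
      ((Real.rpow_nonneg hx.le _).trans hle) (by linarith)).2 hle

lemma exists_forall_le_of_integral_rpow_neg_le_of_one_lt {a γ B : ℝ} (ha : 0 < a)
    (hγ : 1 < γ) (hB : B < a ^ (1 - γ) / (γ - 1)) :
    ∃ C, ∀ x, 0 < x → ∫ s in a..x, s ^ (-γ) ≤ B → x ≤ C := by
  have hpos : 0 < a ^ (1 - γ) + (1 - γ) * B := by
    rw [lt_div_iff₀ (by linarith)] at hB
    linarith
  refine ⟨(a ^ (1 - γ) + (1 - γ) * B) ^ (1 - γ)⁻¹, fun x hx h => ?_⟩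
  rw [integral_rpow_neg_of_pos ha hx hγ.ne', div_le_iff_of_neg (by linarith)] at h
  exact (Real.le_rpow_inv_iff_of_neg hx hpos (by linarith)).2 (by linarith)

theorem statement18_general (p11 p12 : ℝ)
    (hp12 : 0 ≤ p12)
    (h1 : ℝ → ℝ)
    (hh1c : ContinuousOn h1 (Set.Ici 0))
    (hh1p : ∀ t : ℝ, 0 ≤ t → 0 < h1 t)
    (ct : ℝ) (hct : 0 < ct)
    (T : ℝ) (hT : 0 < T)
    (y1 y2 : ℝ → ℝ)
    (hy1pos : ∀ t ∈ Set.Ico (0:ℝ) T, 0 < y1 t)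
    (hy2pos : ∀ t ∈ Set.Ico (0:ℝ) T, 0 < y2 t)
    (hy1d : ∀ t ∈ Set.Ico (0:ℝ) T,
      HasDerivWithinAt y1 (h1 t * y1 t ^ p11 * y2 t ^ p12) (Set.Ico 0 T) t)
    (hbound : ∀ t ∈ Set.Ico (0:ℝ) T,
      y1 0 * (y2 t / y2 0) ^ ct ≤ y1 t) :
    (∀ t ∈ Set.Ico (0:ℝ) T,
      (∫ s in (y1 0)..(y1 t), s ^ (-(p11 + p12 / ct))) ≤
        (y2 0 / y1 0 ^ (1 / ct)) ^ p12 * ∫ s in (0:ℝ)..t, h1 s) ∧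
    (((p11 + p12 / ct) ≤ 1 ∨
        (1 < p11 + p12 / ct ∧
          ∀ t : ℝ, 0 ≤ t →
            (y2 0 / y1 0 ^ (1 / ct)) ^ p12 * (∫ s in (0:ℝ)..t, h1 s) ≤
              y1 0 ^ (1 - (p11 + p12 / ct)) / ((p11 + p12 / ct) - 1))) →
      ∀ S : ℝ, 0 < S → ∃ C : ℝ, ∀ t ∈ Set.Ico (0:ℝ) T, t ≤ S → y1 t ≤ C) := by
  have h0 : (0 : ℝ) ∈ Ico 0 T := ⟨le_rfl, hT⟩
  set γ := p11 + p12 / ct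
  set K := (y2 0 / y1 0 ^ (1 / ct)) ^ p12
  have hK : 0 < K := by have := hy1pos 0 h0; have := hy2pos 0 h0; positivity
  have hcomp : ∀ t ∈ Ico 0 T, ∫ s in y1 0..y1 t, s ^ (-γ) ≤ K * ∫ s in 0..t, h1 s := by
    intro t ht
    rw [← intervalIntegral.integral_const_mul]
    refine integral_comp_le_integral_of_mul_deriv_le
      (fun s hs => (Real.continuousAt_rpow_const _ _ (Or.inl hs.ne')).continuousWithinAt)
      (continuousOn_const.mul hh1c) hy1pos hy1d (fun u hu => ?_) t ht
    exact rpow_neg_add_div_mul_le (hy1pos u hu) (hh1p u hu.1).le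
      (rpow_le_mul_rpow_of_mul_div_rpow_le (hy1pos 0 h0) (hy2pos 0 h0) hct hp12
        (hy2pos u hu).le (hbound u hu))
  refine ⟨hcomp, fun hcase S hS => ?_⟩
  have hmono := strictMonoOn_integral_of_pos hh1c hh1p
  obtain ⟨C, hC⟩ :
      ∃ C, ∀ x, 0 < x → ∫ s in y1 0..x, s ^ (-γ) ≤ K * ∫ s in 0..S, h1 s → x ≤ C := by
    rcases hcase with hγ | ⟨hγ, hF⟩
    · exact exists_forall_le_of_integral_rpow_neg_le_of_le_one (hy1pos 0 h0) hγ _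
    · refine exists_forall_le_of_integral_rpow_neg_le_of_one_lt (hy1pos 0 h0) hγ ?_
      have hlt := hmono (mem_Ici.2 hS.le) (mem_Ici.2 (by linarith)) (lt_add_one S)
      exact (mul_lt_mul_of_pos_left hlt hK).trans_le (hF (S + 1) (by linarith))
  refine ⟨C, fun t ht htS => hC _ (hy1pos t ht) ((hcomp t ht).trans ?_)⟩
  exact mul_le_mul_of_nonneg_left (hmono.monotoneOn ht.1 (mem_Ici.2 hS.le) htS) hK.le

/-- Theorem 1.3(c.2) of the paper. With `a₁ = p₂₁-p₁₁+1 = 0`,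
`a₂ = p₁₂-p₂₂+1 = 0`, `h₁/h₂ ≡ c̃ > 0`, the lower bound
`y₁ ≥ y₁(0)(y₂/y₂(0))^{c̃}` on `[0,T)`, `γ = p₁₁ + p₁₂/c̃` and
`F(t) = (y₂(0)/y₁(0)^{1/c̃})^{p₁₂} ∫₀ᵗ h₁(s) ds`, one has
`∫_{y₁(0)}^{y₁(t)} s^{-γ} ds ≤ F(t)` on `[0,T)`; consequently, if `γ ≤ 1`, or
`γ > 1` and `F(t) ≤ y₁(0)^{1-γ}/(γ-1)` for all `t ≥ 0`, then `y₁` is bounded on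
`[0,T) ∩ [0,S]` for every finite `S > 0`. -/
theorem statement18 (p11 p12 p21 p22 : ℝ)
    (hp11 : 0 ≤ p11) (hp12 : 0 ≤ p12) (hp21 : 0 ≤ p21) (hp22 : 0 ≤ p22)
    (h1 h2 : ℝ → ℝ)
    (hh1c : ContinuousOn h1 (Set.Ici 0)) (hh2c : ContinuousOn h2 (Set.Ici 0))
    (hh1p : ∀ t : ℝ, 0 ≤ t → 0 < h1 t) (hh2p : ∀ t : ℝ, 0 ≤ t → 0 < h2 t)
    (ct : ℝ) (hct : 0 < ct) (hconst : ∀ t : ℝ, 0 ≤ t → h1 t / h2 t = ct)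
    (T : ℝ) (hT : 0 < T)
    (y1 y2 : ℝ → ℝ)
    (hy1pos : ∀ t ∈ Set.Ico (0:ℝ) T, 0 < y1 t)
    (hy2pos : ∀ t ∈ Set.Ico (0:ℝ) T, 0 < y2 t)
    (hy1d : ∀ t ∈ Set.Ico (0:ℝ) T,
      HasDerivWithinAt y1 (h1 t * y1 t ^ p11 * y2 t ^ p12) (Set.Ico 0 T) t)
    (hy2d : ∀ t ∈ Set.Ico (0:ℝ) T,
      HasDerivWithinAt y2 (h2 t * y2 t ^ p22 * y1 t ^ p21) (Set.Ico 0 T) t)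
    (ha1 : p21 - p11 + 1 = 0) (ha2 : p12 - p22 + 1 = 0)
    (hbound : ∀ t ∈ Set.Ico (0:ℝ) T,
      y1 0 * (y2 t / y2 0) ^ ct ≤ y1 t) :
    (∀ t ∈ Set.Ico (0:ℝ) T,
      (∫ s in (y1 0)..(y1 t), s ^ (-(p11 + p12 / ct))) ≤
        (y2 0 / y1 0 ^ (1 / ct)) ^ p12 * ∫ s in (0:ℝ)..t, h1 s) ∧
    (((p11 + p12 / ct) ≤ 1 ∨
        (1 < p11 + p12 / ct ∧
          ∀ t : ℝ, 0 ≤ t →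
            (y2 0 / y1 0 ^ (1 / ct)) ^ p12 * (∫ s in (0:ℝ)..t, h1 s) ≤
              y1 0 ^ (1 - (p11 + p12 / ct)) / ((p11 + p12 / ct) - 1))) →
      ∀ S : ℝ, 0 < S → ∃ C : ℝ, ∀ t ∈ Set.Ico (0:ℝ) T, t ≤ S → y1 t ≤ C) :=
  statement18_general p11 p12 hp12 h1 hh1c hh1p ct hct T hT y1 y2 hy1pos hy2pos hy1d hbound
end

section
/- Let p₁₁, p₁₂, p₂₁, p₂₂ be nonnegative reals and set a₁ = p₂₁ − p₁₁ + 1, a₂ = p₁₂ − p₂₂ + 1. Then the following are equivalent: (i) either (a₁ > 0 and p₂₂·a₁ + p₂₁·a₂ > a₁) or (a₂ > 0 and p₁₁·a₂ + p₁₂·a₁ > a₂); (ii) (p₁₁−1)·(p₂₂−1) − p₁₂·p₂₁ < 0. (Condition (i) is the statement that a₁ > 0 and α₂ := p₂₂ + p₂₁·a₂/a₁ > 1, or a₂ > 0 and α₁ := p₁₁ + p₁₂·a₁/a₂ > 1, written without fractions.) -/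
/-- the algebraic equivalence used in the proof of Corollary 1.4
of the paper. For nonnegative reals `p₁₁,p₁₂,p₂₁,p₂₂`, with
`a₁ = p₂₁-p₁₁+1` and `a₂ = p₁₂-p₂₂+1`, the condition
“(`a₁ > 0` and `p₂₂ a₁ + p₂₁ a₂ > a₁`) or (`a₂ > 0` and `p₁₁ a₂ + p₁₂ a₁ > a₂`)”
is equivalent to `(p₁₁-1)(p₂₂-1) - p₁₂ p₂₁ < 0`. -/
theorem statement19 (p11 p12 p21 p22 : ℝ)
    (hp11 : 0 ≤ p11) (hp12 : 0 ≤ p12) (hp21 : 0 ≤ p21) (hp22 : 0 ≤ p22) :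
    ((0 < p21 - p11 + 1 ∧
        p21 - p11 + 1 <
          p22 * (p21 - p11 + 1) + p21 * (p12 - p22 + 1)) ∨
      (0 < p12 - p22 + 1 ∧
        p12 - p22 + 1 <
          p11 * (p12 - p22 + 1) + p12 * (p21 - p11 + 1))) ↔
      (p11 - 1) * (p22 - 1) - p12 * p21 < 0 := by
  constructor
  · rintro (⟨h1, h2⟩ | ⟨h1, h2⟩) <;> nlinarith
  · intro hD
    rcases lt_or_ge 0 (p21 - p11 + 1) with h | h
    · exact Or.inl ⟨h, by nlinarith⟩
    · have h2 : 0 < p12 - p22 + 1 := by nlinarith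
      exact Or.inr ⟨h2, by nlinarith⟩
end
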